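/- Let M = (W,R,V) be a model, s a propositional variable, and w ∈ W a world such that M,w ⊨ ¬s ∧ @_s⊤ ∧ @_{◇s}s (under ML(DD) semantics). Then there is exactly one world w_s ∈ W with M,w_s ⊨ s; moreover w_s ≠ w, and for every v ∈ W with (v,w_s) ∈ R it holds that v = w_s (i.e., the s-world is accessible only from itself). -/

import Mathlib

/-- ML(DD)-formulas over propositional variables indexed by ℕ. -/
inductive MLDD : Type
  | prop : ℕ → MLDD
  | neg : MLDD → MLDD
  | or : MLDD → MLDD → MLDD
  | dia : MLDD → MLDD
  | dd : MLDD → MLDD → MLDD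

/-- A Kripke model. -/
structure Model where
  W : Type
  ne : Nonempty W
  R : W → W → Prop
  V : ℕ → W → Prop

/-- Satisfaction relation for ML(DD). -/
def sat (M : Model) : M.W → MLDD → Prop
  | w, .prop p => M.V p w
  | w, .neg φ => ¬ sat M w φ
  | w, .or φ ψ => sat M w φ ∨ sat M w ψ
  | w, .dia φ => ∃ v, M.R w v ∧ sat M v φ
  | _, .dd φ ψ => ∃ v, sat M v φ ∧ sat M v ψ ∧ ∀ v', v' ≠ v → ¬ sat M v' φ

/-- Conjunction, as the usual abbreviation. -/
def mand (φ ψ : MLDD) : MLDD := .neg (.or (.neg φ) (.neg ψ))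

/-- ⊤, as a tautology (s ∨ ¬s). -/
def mtop (s : ℕ) : MLDD := .or (.prop s) (.neg (.prop s))

/-!
The hypothesis `@_s⊤` makes `ws` the unique `s`-world, and `¬s` at `w` separates it from `w`.
Then `@_{◇s}s` says that the unique world seeing an `s`-world is itself an `s`-world, i.e. `ws`;
since every predecessor of `ws` sees an `s`-world, it must be `ws`.
-/

section Semantics

variable {M : Model}

@[simp]
theorem sat_mand {w : M.W} {φ ψ : MLDD} : sat M w (mand φ ψ) ↔ sat M w φ ∧ sat M w ψ := by
  simp only [mand, sat, not_or, not_not]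

theorem sat_dd_iff {w : M.W} {φ ψ : MLDD} :
    sat M w (.dd φ ψ) ↔ ∃ v, (∀ u, sat M u φ ↔ u = v) ∧ sat M v ψ := by
  refine ⟨fun ⟨v, hφ, hψ, huniq⟩ => ⟨v, fun u => ⟨fun hu => ?_, ?_⟩, hψ⟩,
    fun ⟨v, hφ, hψ⟩ => ⟨v, (hφ v).2 rfl, hψ, fun u hu h => hu ((hφ u).1 h)⟩⟩
  · by_contra hne
    exact huniq u hne hu
  · rintro rfl
    exact hφ

theorem eq_of_R_of_sat_dd_dia {w ws : M.W} {φ : MLDD} (hφ : ∀ u, sat M u φ ↔ u = ws)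
    (h : sat M w (.dd (.dia φ) φ)) {v : M.W} (hv : M.R v ws) : v = ws := by
  obtain ⟨u, hdia, hu⟩ := sat_dd_iff.1 h
  have hv_sees : sat M v (.dia φ) := ⟨ws, hv, (hφ ws).2 rfl⟩
  rw [(hdia v).1 hv_sees, ← (hφ u).1 hu]

end Semantics

/-- If `M,w ⊨ ¬s ∧ @_s⊤ ∧ @_{◇s}s`, then there is exactly one world `w_s` satisfying `s`;
moreover `w_s ≠ w` and `w_s` is accessible only from itself. -/
theorem trash_world (M : Model) (s : ℕ) (w : M.W)
    (h : sat M w (mand (.neg (.prop s))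
      (mand (.dd (.prop s) (mtop s)) (.dd (.dia (.prop s)) (.prop s))))) :
    ∃ ws : M.W, M.V s ws ∧ (∀ v : M.W, M.V s v → v = ws) ∧ ws ≠ w ∧
      (∀ v : M.W, M.R v ws → v = ws) := by
  obtain ⟨hw, hunique, hdia⟩ := by simpa only [sat_mand] using h
  obtain ⟨ws, hs, -⟩ := sat_dd_iff.1 hunique
  refine ⟨ws, (hs ws).2 rfl, fun v hv => (hs v).1 hv, ?_, fun v => eq_of_R_of_sat_dd_dia hs hdia⟩
  rintro rfl
  exact hw ((hs ws).2 rfl)
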